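/- Let R be a commutative Noetherian local ring, let M and N be finitely generated R-modules, and let Tr M be the transpose of M associated to a finite free presentation of M. If Ext^1_R(Tr M, N) = 0 and Ext^2_R(Tr M, N) = 0, then the natural R-linear map M ⊗_R N → Hom_R(M^*, N), sending m ⊗ n to the homomorphism f ↦ f(m)·n, is an isomorphism. -/

import Mathlib

open CategoryTheory

/-- The `i`-th Ext module `Ext^i_R(X, Y)` of two `R`-modules. -/
noncomputable abbrev extMod (R : Type) [CommRing R] (i : ℕ)
    (X : Type) [AddCommGroup X] [Module R X]
    (Y : Type) [AddCommGroup Y] [Module R Y] : Type :=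
  ((Ext R (ModuleCat R) i).obj (Opposite.op (ModuleCat.of R X))).obj (ModuleCat.of R Y)

/-- A finite free presentation `P_1 → P_0 → M → 0` of `M`. -/
structure FiniteFreePresentation (R : Type) [CommRing R]
    (M : Type) [AddCommGroup M] [Module R M] where
  P1 : Type
  P0 : Type
  [addCommGroup1 : AddCommGroup P1]
  [addCommGroup0 : AddCommGroup P0]
  [module1 : Module R P1]
  [module0 : Module R P0]
  free1 : Module.Free R P1
  free0 : Module.Free R P0
  finite1 : Module.Finite R P1
  finite0 : Module.Finite R P0
  f : P1 →ₗ[R] P0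
  ε : P0 →ₗ[R] M
  surj : Function.Surjective ε
  exact_at : Function.Exact f ε

attribute [instance] FiniteFreePresentation.addCommGroup1 FiniteFreePresentation.addCommGroup0
  FiniteFreePresentation.module1 FiniteFreePresentation.module0

/-- The transpose `Tr M` of `M` associated to a finite free presentation, i.e. the
cokernel of the dual map `P_0^* → P_1^*`. -/
abbrev FiniteFreePresentation.tr {R : Type} [CommRing R] {M : Type}
    [AddCommGroup M] [Module R M] (pr : FiniteFreePresentation R M) : Type :=
  Module.Dual R pr.P1 ⧸ LinearMap.range pr.f.dualMap

/-- The natural map `M ⊗_R N → Hom_R(M^*, N)` sending `m ⊗ n` to `f ↦ f(m) • n`. -/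
noncomputable def tensorToHomDual (R : Type) [CommRing R]
    (M : Type) [AddCommGroup M] [Module R M]
    (N : Type) [AddCommGroup N] [Module R N] :
    TensorProduct R M N →ₗ[R] (Module.Dual R M →ₗ[R] N) :=
  TensorProduct.lift
    (LinearMap.mk₂ R (fun m n => (Module.Dual.eval R M m).smulRight n)
      (fun m₁ m₂ n => by ext φ; simp [add_smul])
      (fun c m n => by ext φ; simp [mul_smul])
      (fun m n₁ n₂ => by ext φ; simp [smul_add])
      (fun c m n => by ext φ; simp [smul_comm c]))

/-!
Dualizing the presentation `P₁ → P₀ → M → 0` gives an exact sequence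
`0 → M^* → P₀^* → P₁^* → Tr M → 0`, which continues by syzygies to a projective resolution of
`Tr M`. Computing `Ext` with it, the vanishing of `Ext¹(Tr M, N)` and `Ext²(Tr M, N)` makes
`Hom(P₁^*, N) → Hom(P₀^*, N) → Hom(M^*, N) → 0` exact. This sequence receives the right
exact sequence `P₁ ⊗ N → P₀ ⊗ N → M ⊗ N → 0`, and the natural map is an isomorphism on the two free
terms, so the five lemma makes it an isomorphism on `M ⊗ N`.
-/

section TensorToHomDual

open Module LinearMap Function

variable {R : Type} [CommRing R] {N : Type} [AddCommGroup N] [Module R N]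

@[simp]
lemma tensorToHomDual_tmul {M : Type} [AddCommGroup M] [Module R M] (m : M) (n : N)
    (φ : Dual R M) : tensorToHomDual R M N (m ⊗ₜ n) φ = φ m • n :=
  rfl

lemma lcomp_dualMap_comp_tensorToHomDual {A B : Type} [AddCommGroup A] [Module R A]
    [AddCommGroup B] [Module R B] (u : A →ₗ[R] B) :
    lcomp R N u.dualMap ∘ₗ tensorToHomDual R A N = tensorToHomDual R B N ∘ₗ u.rTensor N := by
  ext a n φ
  simp

lemma tensorToHomDual_eq_dualTensorHom_comp (P : Type) [AddCommGroup P] [Module R P] :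
    tensorToHomDual R P N = dualTensorHom R (Dual R P) N ∘ₗ (Dual.eval R P).rTensor N := by
  ext p n φ
  simp

lemma tensorToHomDual_bijective_of_projective (P : Type) [AddCommGroup P] [Module R P]
    [Module.Projective R P] [Module.Finite R P] : Bijective (tensorToHomDual R P N) := by
  rw [tensorToHomDual_eq_dualTensorHom_comp]
  exact dualTensorHom_bijective.comp
    (LinearEquiv.rTensor N (LinearEquiv.ofBijective _ (bijective_dual_eval R P))).bijective

theorem tensorToHomDual_bijective_of_presentation {M P₀ P₁ : Type}
    [AddCommGroup M] [Module R M] [AddCommGroup P₀] [Module R P₀] [AddCommGroup P₁] [Module R P₁]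
    [Module.Projective R P₀] [Module.Finite R P₀] [Module.Projective R P₁] [Module.Finite R P₁]
    {f : P₁ →ₗ[R] P₀} {ε : P₀ →ₗ[R] M} (hfε : Exact f ε) (hε : Surjective ε)
    (hexact : Exact (lcomp R N f.dualMap) (lcomp R N ε.dualMap))
    (hsurj : Surjective (lcomp R N ε.dualMap)) :
    Bijective (tensorToHomDual R M N) :=
  bijective_of_surjective_of_bijective_of_right_exact (f.rTensor N) (ε.rTensor N)
    (lcomp R N f.dualMap) (lcomp R N ε.dualMap) _ _ _
    (lcomp_dualMap_comp_tensorToHomDual f) (lcomp_dualMap_comp_tensorToHomDual ε)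
    (rTensor_exact N hfε hε) hexact
    (tensorToHomDual_bijective_of_projective P₁).2 (tensorToHomDual_bijective_of_projective P₀)
    (rTensor_surjective N hε) hsurj

end TensorToHomDual

section HomExactness

open LinearMap Function

variable {R : Type} [CommRing R] {N K Y Z Q Q' : Type} [AddCommGroup N] [Module R N]
  [AddCommGroup K] [Module R K] [AddCommGroup Y] [Module R Y] [AddCommGroup Z] [Module R Z]
  [AddCommGroup Q] [Module R Q] [AddCommGroup Q'] [Module R Q']

lemma lcomp_eq_zero_iff_of_range_eq {ι : K →ₗ[R] Y} {d : Q →ₗ[R] Y} (hrange : range d = range ι)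
    (φ : Y →ₗ[R] N) : lcomp R N ι φ = 0 ↔ lcomp R N d φ = 0 := by
  simp only [lcomp_apply', ← range_le_ker_iff, hrange]

lemma exact_lcomp_of_range_eq {g : Y →ₗ[R] Z} {ι : K →ₗ[R] Y} {d : Q →ₗ[R] Y}
    (hrange : range d = range ι) (h : Exact (lcomp R N g) (lcomp R N d)) :
    Exact (lcomp R N g) (lcomp R N ι) :=
  fun φ => (lcomp_eq_zero_iff_of_range_eq hrange φ).trans (h φ)

lemma exists_surjective_comp_eq_of_range_eq {ι : K →ₗ[R] Y} (hι : Injective ι) {d : Q →ₗ[R] Y}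
    (hrange : range d = range ι) : ∃ π : Q →ₗ[R] K, Surjective π ∧ ι ∘ₗ π = d := by
  let e := (LinearEquiv.ofEq _ _ hrange).trans (LinearEquiv.ofInjective ι hι).symm
  refine ⟨e.toLinearMap ∘ₗ d.rangeRestrict, e.surjective.comp d.surjective_rangeRestrict, ?_⟩
  ext x
  simp [e]

lemma surjective_lcomp_of_range_eq {ι : K →ₗ[R] Y} (hι : Injective ι) {d : Q →ₗ[R] Y}
    {d' : Q' →ₗ[R] Q} (hrange : range d = range ι) (hdd' : d ∘ₗ d' = 0)
    (h : Exact (lcomp R N d) (lcomp R N d')) : Surjective (lcomp R N ι) := by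
  obtain ⟨π, hπ, rfl⟩ := exists_surjective_comp_eq_of_range_eq hι hrange
  have hπd' : π ∘ₗ d' = 0 := by
    ext x
    exact hι (by simpa using congr($hdd' x))
  intro φ
  obtain ⟨ψ, hψ⟩ := (h (φ ∘ₗ π)).1 (by rw [lcomp_apply', LinearMap.comp_assoc, hπd', comp_zero])
  exact ⟨ψ, (cancel_right hπ).1 hψ⟩

end HomExactness

namespace CategoryTheory.ProjectiveResolution

open LinearMap Function

variable {R : Type} [CommRing R] {X : ModuleCat R} (P : ProjectiveResolution X)

/-- `Ext^{i+1}(X, N)` is the cohomology of `Hom(P, N)` at `Hom(P_{i+1}, N)`. -/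
lemma exact_lcomp_d_of_subsingleton_ext (N : ModuleCat R) (i : ℕ)
    (h : Subsingleton (((Ext R (ModuleCat R) (i + 1)).obj (Opposite.op X)).obj N)) :
    Exact (lcomp R N (P.complex.d (i + 1) i).hom)
      (lcomp R N (P.complex.d (i + 2) (i + 1)).hom) := by
  have hexact : (P.complex.linearYonedaObj R N).ExactAt (i + 1) := by
    rw [HomologicalComplex.exactAt_iff_isZero_homology]
    exact (ModuleCat.isZero_of_subsingleton _).of_iso (P.isoExt (i + 1) N).symm
  rw [HomologicalComplex.exactAt_iff' _ i (i + 1) (i + 2) (by simp) (by simp),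
    ShortComplex.moduleCat_exact_iff] at hexact
  intro g
  constructor
  · intro hg
    obtain ⟨k, hk⟩ := hexact (ModuleCat.ofHom g) (ModuleCat.hom_ext hg)
    exact ⟨k.hom, congr(ModuleCat.Hom.hom $hk)⟩
  · rintro ⟨k, rfl⟩
    simp [lcomp_apply', LinearMap.comp_assoc, ← ModuleCat.hom_comp]

end CategoryTheory.ProjectiveResolution

section CokernelResolution

open Limits

variable {R : Type} [CommRing R] {A B : Type} [AddCommGroup A] [Module R A] [AddCommGroup B]
  [Module R B] (u : A →ₗ[R] B)

/-- The complex `⋯ → Q₃ → Q₂ → A → B` continuing `u` by syzygies; for projective `A` and `B`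
it resolves `B ⧸ range u`. -/
noncomputable def cokernelResolutionComplex : ChainComplex (ModuleCat R) ℕ :=
  ChainComplex.mk' (ModuleCat.of R B) (ModuleCat.of R A) (ModuleCat.ofHom u)
    fun g => ⟨_, Projective.d g, (Category.assoc _ _ _).trans
      ((congrArg _ (kernel.condition g)).trans comp_zero)⟩

lemma cokernelResolutionComplex_d_one_zero :
    (cokernelResolutionComplex u).d 1 0 = ModuleCat.ofHom u := by
  simp [cokernelResolutionComplex]

lemma cokernelResolutionComplex_exactAt_succ (n : ℕ) :
    (cokernelResolutionComplex u).ExactAt (n + 1) := by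
  rw [HomologicalComplex.exactAt_iff' _ (n + 2) (n + 1) n (by simp) (by simp)]
  let e : (cokernelResolutionComplex u).X (n + 2) ≅
      Projective.syzygies ((cokernelResolutionComplex u).d (n + 1) n) :=
    ChainComplex.mk'XIso _ _ _ _ n
  have hd : (cokernelResolutionComplex u).d (n + 2) (n + 1) =
      e.hom ≫ Projective.d ((cokernelResolutionComplex u).d (n + 1) n) :=
    ChainComplex.mk'_d _ _ _ _ n
  refine (ShortComplex.exact_iff_of_iso ?_).1
    (exact_d_f ((cokernelResolutionComplex u).d (n + 1) n))
  refine ShortComplex.isoMk e.symm (Iso.refl _) (Iso.refl _) ?_ ?_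
  · exact ((Iso.inv_comp_eq e).2 hd).trans (Category.comp_id _).symm
  · exact (Category.id_comp _).trans (Category.comp_id _).symm

instance [Module.Projective R A] [Module.Projective R B] (n : ℕ) :
    Projective ((cokernelResolutionComplex u).X n) := by
  obtain (_ | _ | _ | n) := n
  · exact (IsProjective.iff_projective _).1 ‹Module.Projective R B›
  · exact (IsProjective.iff_projective _).1 ‹Module.Projective R A›
  all_goals apply Projective.projective_over

lemma exact_ofHom_mkQ_range :
    (ShortComplex.mk (ModuleCat.ofHom u) (ModuleCat.ofHom (LinearMap.range u).mkQ)
      (ModuleCat.hom_ext (LinearMap.range_mkQ_comp u))).Exact :=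
  (ShortComplex.ShortExact.moduleCat_exact_iff_function_exact _).2
    (LinearMap.exact_map_mkQ_range u)

noncomputable def cokernelResolution [Module.Projective R A] [Module.Projective R B] :
    ProjectiveResolution (ModuleCat.of R (B ⧸ LinearMap.range u)) where
  complex := cokernelResolutionComplex u
  π := (ChainComplex.toSingle₀Equiv _ _).symm ⟨ModuleCat.ofHom (LinearMap.range u).mkQ, by
    rw [cokernelResolutionComplex_d_one_zero]
    exact ModuleCat.hom_ext (LinearMap.range_mkQ_comp u)⟩
  quasiIso := ⟨fun n => by
    cases n with
    | zero =>
      rw [ChainComplex.quasiIsoAt₀_iff, ShortComplex.quasiIso_iff_of_zeros']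
      · refine (ShortComplex.exact_and_epi_g_iff_of_iso ?_).2
          ⟨exact_ofHom_mkQ_range u,
            (ModuleCat.epi_iff_surjective _).2 (LinearMap.range u).mkQ_surjective⟩
        exact ShortComplex.isoMk (Iso.refl _) (Iso.refl _) (Iso.refl _)
          (by simp [cokernelResolutionComplex]; rfl) (by simp; rfl)
      all_goals rfl
    | succ n =>
      rw [quasiIsoAt_iff_exactAt']
      · exact cokernelResolutionComplex_exactAt_succ u n
      · exact ChainComplex.exactAt_succ_single_obj _ _⟩

end CokernelResolution

section ExtOfCokernel

open LinearMap Function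

variable {R : Type} [CommRing R] {A B K N : Type} [AddCommGroup A] [Module R A]
  [AddCommGroup B] [Module R B] [AddCommGroup K] [Module R K] [AddCommGroup N] [Module R N]
  [Module.Projective R A] [Module.Projective R B] {u : A →ₗ[R] B} {ι : K →ₗ[R] A}

lemma cokernelResolution_hom_d_one_zero :
    (((cokernelResolution u).complex.d 1 0).hom : A →ₗ[R] B) = u :=
  congr(ModuleCat.Hom.hom $(cokernelResolutionComplex_d_one_zero u))

lemma cokernelResolution_range_hom_d_two_one (hι : Exact ι u) :
    range ((cokernelResolution u).complex.d 2 1).hom = range ι := by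
  have h := ((cokernelResolution u).exact_succ 0).moduleCat_range_eq_ker
  rw [cokernelResolution_hom_d_one_zero] at h
  exact h.trans hι.linearMap_ker_eq

lemma exact_lcomp_of_subsingleton_ext_one (hι : Exact ι u)
    (h : Subsingleton (((Ext R (ModuleCat R) 1).obj
      (Opposite.op (ModuleCat.of R (B ⧸ range u)))).obj (ModuleCat.of R N))) :
    Exact (lcomp R N u) (lcomp R N ι) := by
  have hExt := (cokernelResolution u).exact_lcomp_d_of_subsingleton_ext (.of R N) 0 h
  rw [cokernelResolution_hom_d_one_zero] at hExt
  exact exact_lcomp_of_range_eq (cokernelResolution_range_hom_d_two_one hι) hExt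

lemma surjective_lcomp_of_subsingleton_ext_two (hιu : Exact ι u) (hι : Injective ι)
    (h : Subsingleton (((Ext R (ModuleCat R) 2).obj
      (Opposite.op (ModuleCat.of R (B ⧸ range u)))).obj (ModuleCat.of R N))) :
    Surjective (lcomp R N ι) :=
  surjective_lcomp_of_range_eq hι (cokernelResolution_range_hom_d_two_one hιu)
    congr(ModuleCat.Hom.hom $((cokernelResolution u).complex.d_comp_d 3 2 1))
    ((cokernelResolution u).exact_lcomp_d_of_subsingleton_ext (.of R N) 1 h)

end ExtOfCokernel

attribute [instance] FiniteFreePresentation.free1 FiniteFreePresentation.free0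
  FiniteFreePresentation.finite1 FiniteFreePresentation.finite0

theorem tensorToHomDual_bijective_of_ext_trM_vanishing_general
    (R : Type) [CommRing R]
    (M N : Type) [AddCommGroup M] [Module R M] [AddCommGroup N] [Module R N]
    (pr : FiniteFreePresentation R M)
    (h1 : Subsingleton (extMod R 1 pr.tr N))
    (h2 : Subsingleton (extMod R 2 pr.tr N)) :
    Function.Bijective (tensorToHomDual R M N) := by
  have hdual : Function.Exact pr.ε.dualMap pr.f.dualMap :=
    LinearMap.exact_lcomp_of_exact_of_surjective R pr.exact_at pr.surj
  exact tensorToHomDual_bijective_of_presentation pr.exact_at pr.surj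
    (exact_lcomp_of_subsingleton_ext_one hdual h1)
    (surjective_lcomp_of_subsingleton_ext_two hdual
      (LinearMap.dualMap_injective_of_surjective pr.surj) h2)

/-- If `Ext^1_R(Tr M, N) = 0` and `Ext^2_R(Tr M, N) = 0`, then the natural map
`M ⊗_R N → Hom_R(M^*, N)`, `m ⊗ n ↦ (f ↦ f(m)·n)`, is an isomorphism. -/
theorem tensorToHomDual_bijective_of_ext_trM_vanishing
    (R : Type) [CommRing R] [IsNoetherianRing R] [IsLocalRing R]
    (M N : Type) [AddCommGroup M] [Module R M] [AddCommGroup N] [Module R N]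
    [Module.Finite R M] [Module.Finite R N]
    (pr : FiniteFreePresentation R M)
    (h1 : Subsingleton (extMod R 1 pr.tr N))
    (h2 : Subsingleton (extMod R 2 pr.tr N)) :
    Function.Bijective (tensorToHomDual R M N) :=
  tensorToHomDual_bijective_of_ext_trM_vanishing_general R M N pr h1 h2
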